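/- Assume d ≥ 1, L ≥ 1, γ > 0, λ > 0. The points (1, 1) and (−1, −1) are global minimizers of R on the square [−1, 1]²: for every (κ, ν) ∈ [−1, 1]², R(1, 1) = R(−1, −1) ≤ R(κ, ν), with strict inequality unless (κ, ν) ∈ {(1, 1), (−1, −1)}. -/

import Mathlib

open MeasureTheory ProbabilityTheory Real Filter

noncomputable def erf (u : ℝ) : ℝ := 2 / Real.sqrt Real.pi * ∫ r in (0:ℝ)..u, Real.exp (-r ^ 2)

noncomputable def zeta (t s : ℝ) : ℝ := ∫ g, erf (t + g) ^ 2 ∂(gaussianReal 0 s.toNNReal)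

/-- The reduced risk `R(κ, ν)` on the invariant manifold. -/
noncomputable def Rred (d L : ℕ) (γ lam ε : ℝ) (κ ν : ℝ) : ℝ :=
  γ ^ 2 - 2 * γ ^ 2 * ν * erf (lam * Real.sqrt ((d : ℝ) / 2) * κ /
      Real.sqrt (1 + 2 * lam ^ 2 * γ ^ 2))
    + γ ^ 2 * zeta (lam * Real.sqrt ((d : ℝ) / 2) * κ) (lam ^ 2 * γ ^ 2)
    + ((L : ℝ) - 1) * zeta 0 (lam ^ 2) + ε ^ 2

/-- Partial derivative `∂κR` of the reduced risk with respect to its first argument. -/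
noncomputable def dkR (d L : ℕ) (γ lam ε : ℝ) (κ ν : ℝ) : ℝ :=
  deriv (fun x => Rred d L γ lam ε x ν) κ

/-- Partial derivative `∂νR` of the reduced risk with respect to its second argument. -/
noncomputable def dvR (d L : ℕ) (γ lam ε : ℝ) (κ ν : ℝ) : ℝ :=
  deriv (fun y => Rred d L γ lam ε κ y) ν

/-- The PGD map `g_α`. -/
noncomputable def pgd (d L : ℕ) (γ lam ε α : ℝ) (p : ℝ × ℝ) : ℝ × ℝ :=
  ((p.1 - α * dkR d L γ lam ε p.1 p.2 * (1 - p.1 ^ 2)) /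
      Real.sqrt (1 + α ^ 2 * (dkR d L γ lam ε p.1 p.2) ^ 2 * (1 - p.1 ^ 2)),
   (p.2 - α * dvR d L γ lam ε p.1 p.2 * (1 - p.2 ^ 2)) /
      Real.sqrt (1 + α ^ 2 * (dvR d L γ lam ε p.1 p.2) ^ 2 * (1 - p.2 ^ 2)))

/-- The square `[−1, 1]²`. -/
def sqIcc : Set (ℝ × ℝ) := {p | p.1 ∈ Set.Icc (-1 : ℝ) 1 ∧ p.2 ∈ Set.Icc (-1 : ℝ) 1}

/-!
Write `c = λ√(d/2)`, `s = λ²γ²`, `q = √(1 + 2s)` and `h t = 2 erf (t / q) - ζ(t, s)`. Then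
`R(κ, ν) - R(1, 1) = γ² (h c - h (cκ) + 2 (1 - ν) erf (cκ / q))` and `R(-κ, -ν) = R(κ, ν)`.
Differentiating in `t` gives the Gaussian smoothing identity `E[erf (t + G)] = erf (t / q)`, so
`h t = E[φ (erf (t + G))]` with `φ y = 2y - y²`, which is strictly increasing on `(-1, 1)`.
Hence `h` is strictly increasing, and for `0 ≤ κ ≤ 1`, `ν ≤ 1` both terms above are nonnegative and
vanish together only at `κ = ν = 1`.
-/

open scoped Topology NNReal

lemma hasDerivAt_erf (u : ℝ) : HasDerivAt erf (2 / √π * exp (-u ^ 2)) u := by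
  have hc : Continuous fun r : ℝ => exp (-r ^ 2) := by fun_prop
  exact (intervalIntegral.integral_hasDerivAt_right (hc.intervalIntegrable 0 u)
    (hc.stronglyMeasurableAtFilter _ _) hc.continuousAt).const_mul _

@[fun_prop]
lemma continuous_erf : Continuous erf :=
  continuous_iff_continuousAt.2 fun u => (hasDerivAt_erf u).continuousAt

lemma strictMono_erf : StrictMono erf :=
  strictMono_of_deriv_pos fun u => by rw [(hasDerivAt_erf u).deriv]; positivity

@[simp] lemma erf_zero : erf 0 = 0 := by simp [erf]

lemma erf_neg (u : ℝ) : erf (-u) = -erf u := by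
  have h := intervalIntegral.integral_comp_neg (a := 0) (b := u) fun r => exp (-r ^ 2)
  simp only [neg_sq, neg_zero] at h
  rw [erf, erf, h, intervalIntegral.integral_symm, mul_neg]

lemma erf_pos {u : ℝ} (hu : 0 < u) : 0 < erf u := erf_zero ▸ strictMono_erf hu

lemma erf_nonneg {u : ℝ} (hu : 0 ≤ u) : 0 ≤ erf u := erf_zero ▸ strictMono_erf.monotone hu

lemma tendsto_erf_atTop : Tendsto erf atTop (𝓝 1) := by
  have hint : IntegrableOn (fun r : ℝ => exp (-r ^ 2)) (Set.Ioi 0) := by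
    simpa using (integrable_exp_neg_mul_sq one_pos).integrableOn
  have h := (intervalIntegral_tendsto_integral_Ioi 0 hint tendsto_id).const_mul (2 / √π)
  have hI : ∫ r in Set.Ioi (0 : ℝ), exp (-r ^ 2) = √π / 2 := by
    simpa using integral_gaussian_Ioi 1
  rwa [hI, div_mul_div_cancel₀ (by positivity), div_self two_ne_zero] at h

lemma erf_lt_one (u : ℝ) : erf u < 1 :=
  (strictMono_erf (lt_add_one u)).trans_le
    (strictMono_erf.monotone.ge_of_tendsto tendsto_erf_atTop _)

lemma neg_one_lt_erf (u : ℝ) : -1 < erf u := by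
  linarith [erf_neg u ▸ erf_lt_one (-u)]

lemma abs_erf_le_one (u : ℝ) : |erf u| ≤ 1 :=
  abs_le.2 ⟨(neg_one_lt_erf u).le, (erf_lt_one u).le⟩

section FiniteMeasure

variable {μ : Measure ℝ} [IsFiniteMeasure μ]

lemma integrable_erf_const_add (t : ℝ) : Integrable (fun g => erf (t + g)) μ :=
  .of_bound (by fun_prop) 1 (ae_of_all _ fun g => abs_erf_le_one _)

lemma integrable_erf_const_add_sq (t : ℝ) : Integrable (fun g => erf (t + g) ^ 2) μ :=
  .of_bound (by fun_prop) 1 (ae_of_all _ fun g => by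
    simpa [abs_pow] using pow_le_one₀ (abs_nonneg _) (abs_erf_le_one (t + g)) (n := 2))

lemma hasDerivAt_integral_erf_const_add (t : ℝ) :
    HasDerivAt (fun t => ∫ g, erf (t + g) ∂μ) (∫ g, 2 / √π * exp (-(t + g) ^ 2) ∂μ) t := by
  refine (hasDerivAt_integral_of_dominated_loc_of_deriv_le (F := fun t g => erf (t + g))
    (F' := fun t g => 2 / √π * exp (-(t + g) ^ 2)) (bound := fun _ => 2 / √π)
    (Metric.ball_mem_nhds t one_pos) (.of_forall fun _ => by fun_prop)
    (integrable_erf_const_add t) (by fun_prop) (ae_of_all _ fun g x _ => ?_)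
    (integrable_const _) (ae_of_all _ fun g x _ => ?_)).2
  · rw [norm_of_nonneg (by positivity)]
    exact mul_le_of_le_one_right (by positivity) (exp_le_one_iff.2 (by nlinarith))
  · exact (hasDerivAt_erf (x + g)).comp_add_const x g

end FiniteMeasure

lemma integral_comp_neg_gaussianReal {E : Type*} [NormedAddCommGroup E] [NormedSpace ℝ E]
    (v : ℝ≥0) (f : ℝ → E) : ∫ x, f (-x) ∂gaussianReal 0 v = ∫ x, f x ∂gaussianReal 0 v := by
  conv_rhs => rw [← neg_zero, ← gaussianReal_map_neg]
  exact (integral_map_equiv (MeasurableEquiv.neg ℝ) f).symm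

lemma integral_exp_neg_sq_const_add_gaussianReal (v : ℝ≥0) (t : ℝ) :
    ∫ g, exp (-(t + g) ^ 2) ∂gaussianReal 0 v
      = (√(1 + 2 * v))⁻¹ * exp (-t ^ 2 / (1 + 2 * v)) := by
  rcases eq_or_ne v 0 with rfl | hv
  · simp [gaussianReal_zero_var]
  set B : ℝ := (1 + 2 * v) / (2 * v)
  -- completing the square in `g`
  have hsq : ∀ g : ℝ, gaussianPDFReal 0 v g * exp (-(t + g) ^ 2)
      = (√(2 * π * v))⁻¹ * exp (-t ^ 2 / (1 + 2 * v)) * exp (-B * (g + t / B) ^ 2) := by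
    intro g
    simp only [gaussianPDFReal_def, mul_assoc, ← exp_add, B]
    congr 2
    field_simp
    ring
  have hπB : √(π / B) = √(2 * π * v) / √(1 + 2 * v) := by
    rw [← sqrt_div' _ (by positivity)]
    congr 1
    simp only [B]
    field_simp
  simp_rw [integral_gaussianReal_eq_integral_smul hv, smul_eq_mul, hsq, integral_const_mul,
    integral_add_right_eq_self (fun g => exp (-B * g ^ 2)), integral_gaussian, hπB]
  field_simp

lemma integral_erf_const_add_gaussianReal (v : ℝ≥0) (t : ℝ) :
    ∫ g, erf (t + g) ∂gaussianReal 0 v = erf (t / √(1 + 2 * v)) := by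
  have hderiv : ∀ x, HasDerivAt
      (fun t => ∫ g, erf (t + g) ∂gaussianReal 0 v - erf (t / √(1 + 2 * v))) 0 x := by
    intro x
    have h := (hasDerivAt_integral_erf_const_add (μ := gaussianReal 0 v) x).sub
      ((hasDerivAt_erf _).comp x ((hasDerivAt_id x).div_const (√(1 + 2 * v))))
    rw [integral_const_mul, integral_exp_neg_sq_const_add_gaussianReal, div_pow,
      sq_sqrt (by positivity)] at h
    exact h.congr_deriv (by simp only [id, neg_div]; ring)
  have h0 : ∫ g, erf g ∂gaussianReal 0 v = 0 := by
    have := integral_comp_neg_gaussianReal v erf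
    simp only [erf_neg, integral_neg] at this
    linarith
  have := is_const_of_deriv_eq_zero (fun x => (hderiv x).differentiableAt)
    (fun x => (hderiv x).deriv) t 0
  simpa [h0, sub_eq_zero] using this

lemma zeta_neg (t s : ℝ) : zeta (-t) s = zeta t s := by
  rw [zeta, ← integral_comp_neg_gaussianReal]
  simp only [zeta, ← neg_add, erf_neg, neg_sq]

lemma strictMono_integral_two_mul_erf_sub_sq (μ : Measure ℝ) [IsProbabilityMeasure μ] :
    StrictMono fun t => ∫ g, (2 * erf (t + g) - erf (t + g) ^ 2) ∂μ := by
  intro t₁ t₂ ht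
  have hint : ∀ t, Integrable (fun g => 2 * erf (t + g) - erf (t + g) ^ 2) μ := fun t =>
    ((integrable_erf_const_add t).const_mul 2).sub (integrable_erf_const_add_sq t)
  -- `y ↦ 2 * y - y ^ 2` is strictly increasing on `(-1, 1)`, where `erf` takes its values
  have hlt : ∀ g, 2 * erf (t₁ + g) - erf (t₁ + g) ^ 2 < 2 * erf (t₂ + g) - erf (t₂ + g) ^ 2 := by
    intro g
    have h₁₂ := strictMono_erf (by linarith : t₁ + g < t₂ + g)
    nlinarith [neg_one_lt_erf (t₁ + g), erf_lt_one (t₂ + g)]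
  rw [← sub_pos, ← integral_sub (hint t₂) (hint t₁), integral_pos_iff_support_of_nonneg_ae
    (ae_of_all _ fun g => (sub_pos.2 (hlt g)).le) ((hint t₂).sub (hint t₁)),
    Function.support_eq_univ fun g => (sub_pos.2 (hlt g)).ne']
  simp

lemma strictMono_two_mul_erf_div_sub_zeta {s : ℝ} (hs : 0 ≤ s) :
    StrictMono fun t => 2 * erf (t / √(1 + 2 * s)) - zeta t s := by
  convert strictMono_integral_two_mul_erf_sub_sq (gaussianReal 0 s.toNNReal) using 2 with t
  rw [integral_sub ((integrable_erf_const_add t).const_mul 2) (integrable_erf_const_add_sq t),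
    integral_const_mul, integral_erf_const_add_gaussianReal, Real.coe_toNNReal _ hs, zeta]

section ReducedRisk

variable (d L : ℕ) (γ lam ε : ℝ)

lemma Rred_neg_neg (κ ν : ℝ) : Rred d L γ lam ε (-κ) (-ν) = Rred d L γ lam ε κ ν := by
  simp only [Rred, mul_neg, neg_div, erf_neg, zeta_neg]
  ring

variable {d γ lam}

lemma Rred_one_one_lt_of_nonneg (hd : 1 ≤ d) (hγ : 0 < γ) (hlam : 0 < lam) {κ ν : ℝ}
    (hκ₀ : 0 ≤ κ) (hκ₁ : κ ≤ 1) (hν : ν ≤ 1) (hne : (κ, ν) ≠ (1, 1)) :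
    Rred d L γ lam ε 1 1 < Rred d L γ lam ε κ ν := by
  set c := lam * √((d : ℝ) / 2)
  set q := √(1 + 2 * lam ^ 2 * γ ^ 2)
  set h := fun t => 2 * erf (t / q) - zeta t (lam ^ 2 * γ ^ 2)
  have hc : 0 < c := mul_pos hlam (sqrt_pos.2 (div_pos (Nat.cast_pos.2 hd) two_pos))
  have hmono : StrictMono h := by
    have := strictMono_two_mul_erf_div_sub_zeta (by positivity : 0 ≤ lam ^ 2 * γ ^ 2)
    rwa [← mul_assoc] at this
  have hdiff : Rred d L γ lam ε κ ν - Rred d L γ lam ε 1 1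
      = γ ^ 2 * ((h c - h (c * κ)) + 2 * (1 - ν) * erf (c * κ / q)) := by
    simp only [Rred, h, c, q, mul_one]
    ring
  have herf : 0 ≤ erf (c * κ / q) := erf_nonneg (by positivity)
  rw [← sub_pos, hdiff]
  refine mul_pos (by positivity) ?_
  rcases hκ₁.lt_or_eq with hκ | rfl
  · have := hmono (by nlinarith : c * κ < c)
    nlinarith
  · have hν' : ν < 1 := hν.lt_of_ne (by rintro rfl; exact hne rfl)
    rw [mul_one, sub_self, zero_add]
    exact mul_pos (by linarith) (erf_pos (by positivity))

end ReducedRisk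

theorem stmt5_general (d L : ℕ) (hd : 1 ≤ d) (γ lam ε : ℝ)
    (hγ : 0 < γ) (hlam : 0 < lam) :
    Rred d L γ lam ε 1 1 = Rred d L γ lam ε (-1) (-1) ∧
    ∀ p ∈ sqIcc, Rred d L γ lam ε 1 1 ≤ Rred d L γ lam ε p.1 p.2 ∧
      (p ≠ ((1 : ℝ), (1 : ℝ)) → p ≠ ((-1 : ℝ), (-1 : ℝ)) →
        Rred d L γ lam ε 1 1 < Rred d L γ lam ε p.1 p.2) := by
  have hsymm : Rred d L γ lam ε 1 1 = Rred d L γ lam ε (-1) (-1) := (Rred_neg_neg ..).symm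
  have hlt : ∀ p ∈ sqIcc, p ≠ (1, 1) → p ≠ (-1, -1) →
      Rred d L γ lam ε 1 1 < Rred d L γ lam ε p.1 p.2 := by
    rintro ⟨κ, ν⟩ ⟨⟨hκ₁, hκ₂⟩, hν₁, hν₂⟩ hne₁ hne₂
    rcases le_total 0 κ with hκ | hκ
    · exact Rred_one_one_lt_of_nonneg L ε hd hγ hlam hκ hκ₂ hν₂ hne₁
    · rw [← Rred_neg_neg d L γ lam ε κ ν]
      refine Rred_one_one_lt_of_nonneg L ε hd hγ hlam (neg_nonneg.2 hκ) (by linarith)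
        (by linarith) fun h => hne₂ ?_
      simp only [Prod.mk.injEq, neg_eq_iff_eq_neg] at h ⊢
      exact h
  refine ⟨hsymm, fun p hp => ⟨?_, hlt p hp⟩⟩
  by_cases h₁ : p = (1, 1)
  · rw [h₁]
  by_cases h₂ : p = (-1, -1)
  · rw [h₂, hsymm]
  exact (hlt p hp h₁ h₂).le

/-- `(1,1)` and `(−1,−1)` are the global minimizers of the reduced risk on `[−1,1]²`. -/
theorem stmt5 (d L : ℕ) (hd : 1 ≤ d) (hL : 1 ≤ L) (γ lam ε : ℝ)
    (hγ : 0 < γ) (hlam : 0 < lam) (hε : 0 ≤ ε) :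
    Rred d L γ lam ε 1 1 = Rred d L γ lam ε (-1) (-1) ∧
    ∀ p ∈ sqIcc, Rred d L γ lam ε 1 1 ≤ Rred d L γ lam ε p.1 p.2 ∧
      (p ≠ ((1 : ℝ), (1 : ℝ)) → p ≠ ((-1 : ℝ), (-1 : ℝ)) →
        Rred d L γ lam ε 1 1 < Rred d L γ lam ε p.1 p.2) :=
  stmt5_general d L hd γ lam ε hγ hlam
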